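/- arXiv:1612.08225 — 4 statements merged into one kernel-verified Lean document; each statement's English description precedes it below -/
import Mathlib

section
/- Let m > 1 and define j_{m,2}(X) = -X^{-m} + X^{1-m} + X - X^2 for X > 0. Then j_{m,2}''(X) ≤ -2 for all X ∈ (0, 1+1/m], and consequently j_{m,2}(X) ≤ -(X-1)^2 for all X ∈ (0, 1+1/m]. -/
open Real

/-!
Adding `(X - 1)²` to `j_{m,2}` gives a function whose second derivative `j_{m,2}'' + 2` is
nonpositive on `(0, 1 + 1/m]`, so it is concave there; it vanishes together with its derivative
at `X = 1`, hence is maximal at `1`. The bound on `j_{m,2}''` comes from the factorisation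
`j_{m,2}''(X) = m X^{-m-2} ((m - 1) X - (m + 1)) - 2`, whose bracket is at most `-X` once
`m X ≤ m + 1`.
-/

namespace ConcaveOn

theorem isMaxOn_of_hasDerivAt_zero {S : Set ℝ} {f : ℝ → ℝ} {a : ℝ} (hf : ConcaveOn ℝ S f)
    (ha : a ∈ S) (hf' : HasDerivAt f 0 a) : IsMaxOn f S a := by
  refine isMaxOn_iff.2 fun x hx => ?_
  rcases lt_trichotomy x a with hxa | rfl | hax
  · have := hf.le_slope_of_hasDerivAt hx ha hxa hf'
    rw [slope_def_field, le_div_iff₀ (sub_pos.2 hxa)] at this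
    linarith
  · exact le_rfl
  · have := hf.slope_le_of_hasDerivAt ha hx hax hf'
    rw [slope_def_field, div_le_iff₀ (sub_pos.2 hax)] at this
    linarith

end ConcaveOn

theorem le_tangent_sub_sq_of_hasDerivAt2_le {S : Set ℝ} (hS : Convex ℝ S) {f f' f'' : ℝ → ℝ}
    {a c x : ℝ} (hf : ∀ y ∈ S, HasDerivAt f (f' y) y) (hf' : ∀ y ∈ S, HasDerivAt f' (f'' y) y)
    (hf'' : ∀ y ∈ S, f'' y ≤ -c) (ha : a ∈ S) (hx : x ∈ S) :
    f x ≤ f a + f' a * (x - a) - c / 2 * (x - a) ^ 2 := by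
  set g : ℝ → ℝ := fun y => f y - f' a * (y - a) + c / 2 * (y - a) ^ 2
  have hg : ∀ y ∈ S, HasDerivAt g (f' y - f' a + c * (y - a)) y := fun y hy =>
    (((hf y hy).sub (((hasDerivAt_id y).sub_const a).const_mul (f' a))).add
      ((((hasDerivAt_id y).sub_const a).pow 2).const_mul (c / 2))).congr_deriv (by simp; ring)
  have hg' : ∀ y ∈ S, HasDerivAt (fun y => f' y - f' a + c * (y - a)) (f'' y + c) y :=
    fun y hy => (((hf' y hy).sub_const (f' a)).add
      (((hasDerivAt_id y).sub_const a).const_mul c)).congr_deriv (by simp)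
  have hconc : ConcaveOn ℝ S g :=
    concaveOn_of_hasDerivWithinAt2_nonpos hS
      (fun y hy => (hg y hy).continuousAt.continuousWithinAt)
      (fun y hy => (hg y (interior_subset hy)).hasDerivWithinAt)
      (fun y hy => (hg' y (interior_subset hy)).hasDerivWithinAt)
      (fun y hy => by linarith [hf'' y (interior_subset hy)])
  have hmax : g x ≤ g a :=
    isMaxOn_iff.1 (hconc.isMaxOn_of_hasDerivAt_zero ha (by simpa using hg a ha)) x hx
  simp only [g, sub_self, mul_zero, sub_zero] at hmax
  linarith

noncomputable def jm2 (m X : ℝ) : ℝ := -X ^ (-m) + X ^ (1 - m) + X - X ^ (2 : ℕ)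

section jm2

variable {m x : ℝ}

theorem hasDerivAt_jm2 (hx : 0 < x) :
    HasDerivAt (jm2 m) (m * x ^ (-m - 1) + (1 - m) * x ^ (-m) + 1 - 2 * x) x := by
  have h₁ := Real.hasDerivAt_rpow_const (x := x) (p := -m) (Or.inl hx.ne')
  have h₂ := Real.hasDerivAt_rpow_const (x := x) (p := 1 - m) (Or.inl hx.ne')
  refine (((h₁.neg.add h₂).add (hasDerivAt_id x)).sub (hasDerivAt_pow 2 x)).congr_deriv ?_
  simp only [sub_sub_cancel_left]
  ring

theorem hasDerivAt_deriv_jm2 (hx : 0 < x) :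
    HasDerivAt (fun y => m * y ^ (-m - 1) + (1 - m) * y ^ (-m) + 1 - 2 * y)
      (m * x ^ (-m - 2) * ((m - 1) * x - (m + 1)) - 2) x := by
  have h₁ := Real.hasDerivAt_rpow_const (x := x) (p := -m - 1) (Or.inl hx.ne')
  have h₂ := Real.hasDerivAt_rpow_const (x := x) (p := -m) (Or.inl hx.ne')
  refine ((((h₁.const_mul m).add (h₂.const_mul (1 - m))).add_const 1).sub
    ((hasDerivAt_id x).const_mul 2)).congr_deriv ?_
  have hpow : x ^ (-m - 1) = x ^ (-m - 2) * x := by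
    rw [← Real.rpow_add_one hx.ne']; ring_nf
  rw [show -m - 1 - 1 = -m - 2 by ring, hpow]
  ring

theorem deriv_deriv_jm2 (hx : 0 < x) :
    deriv (deriv (jm2 m)) x = m * x ^ (-m - 2) * ((m - 1) * x - (m + 1)) - 2 := by
  have hderiv : deriv (jm2 m) =ᶠ[nhds x]
      fun y => m * y ^ (-m - 1) + (1 - m) * y ^ (-m) + 1 - 2 * y := by
    filter_upwards [eventually_gt_nhds hx] with y hy using (hasDerivAt_jm2 hy).deriv
  rw [hderiv.deriv_eq, (hasDerivAt_deriv_jm2 hx).deriv]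

theorem deriv2_jm2_le (hm : 0 < m) (hx : 0 < x) (hxm : x ≤ 1 + 1 / m) :
    m * x ^ (-m - 2) * ((m - 1) * x - (m + 1)) - 2 ≤ -2 := by
  have hmx : m * x ≤ m + 1 := by
    calc m * x ≤ m * (1 + 1 / m) := by gcongr
      _ = m + 1 := by field_simp
  have hfactor : (m - 1) * x - (m + 1) ≤ 0 := by linarith
  have := mul_nonpos_of_nonneg_of_nonpos (mul_pos hm (Real.rpow_pos_of_pos hx (-m - 2))).le hfactor
  linarith

theorem jm2_le_neg_sq (hm : 0 < m) (hx : x ∈ Set.Ioc 0 (1 + 1 / m)) :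
    jm2 m x ≤ -(x - 1) ^ 2 := by
  have h₁ : (1 : ℝ) ∈ Set.Ioc 0 (1 + 1 / m) := ⟨one_pos, by simp [hm.le]⟩
  have := le_tangent_sub_sq_of_hasDerivAt2_le (convex_Ioc 0 (1 + 1 / m)) (c := 2)
    (fun y hy => hasDerivAt_jm2 hy.1) (fun y hy => hasDerivAt_deriv_jm2 hy.1)
    (fun y hy => deriv2_jm2_le hm hy.1 hy.2) h₁ hx
  norm_num [jm2] at this ⊢
  linarith

end jm2

/-- For `m > 1` and `j_{m,2}(X) = -X^{-m} + X^{1-m} + X - X²`, one has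
`j_{m,2}'' ≤ -2` on `(0, 1+1/m]`, hence `j_{m,2}(X) ≤ -(X-1)²` there. -/
theorem stmt_6 (m : ℝ) (hm : 1 < m) :
    ∀ X ∈ Set.Ioc (0 : ℝ) (1 + 1 / m),
      deriv (deriv (fun X : ℝ => -X ^ (-m) + X ^ (1 - m) + X - X ^ (2 : ℕ))) X ≤ -2 ∧
      -X ^ (-m) + X ^ (1 - m) + X - X ^ (2 : ℕ) ≤ -(X - 1) ^ (2 : ℕ) := by
  have hm₀ : 0 < m := by linarith
  intro X hX
  refine ⟨?_, jm2_le_neg_sq hm₀ hX⟩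
  change deriv (deriv (jm2 m)) X ≤ -2
  rw [deriv_deriv_jm2 hX.1]
  exact deriv2_jm2_le hm₀ hX.1 hX.2
end

section
/- Let m ∈ (0,1) and u : (0,1) → (0,∞) integrable with ⟨u⟩ := ∫_0^1 u ds. Then J_{m,2}[u] := -⟨u^{-m}⟩ + ⟨u^{1-m}⟩ + ⟨u⟩ - ⟨u⟩^2 ≤ -(⟨u⟩ - 1)^2. -/
/-!
Jensen's inequality gives `⟨u⟩^{-m} ≤ ⟨u^{-m}⟩` (convexity of `t ↦ t^{-m}`) and
`⟨u^{1-m}⟩ ≤ ⟨u⟩^{1-m}` (concavity of `t ↦ t^{1-m}`), which reduces the claim to the pointwise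
bound `-X^{-m} + X^{1-m} + X - X² ≤ -(X - 1)²` at `X = ⟨u⟩`; the latter says
`(X^{-m} - 1)(X - 1) ≤ 0`.
-/

open Real MeasureTheory

lemma one_add_sub_mul_le_rpow_neg {m t : ℝ} (hm : 0 ≤ m) (ht : 0 < t) :
    1 + m - m * t ≤ t ^ (-m) := by
  -- Bernoulli's inequality `(t⁻¹)^(1+m) ≥ 1 + (1+m)(t⁻¹ - 1)`, multiplied by `t`
  have h := one_add_mul_self_le_rpow_one_add (s := t⁻¹ - 1) (by simp; positivity)
    (p := 1 + m) (by linarith)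
  rw [add_sub_cancel, inv_rpow ht.le, ← rpow_neg ht.le, neg_add, rpow_add ht, rpow_neg_one] at h
  have := mul_le_mul_of_nonneg_left h ht.le
  field_simp at this ⊢
  linarith

lemma rpow_neg_tangent_le {m c t : ℝ} (hm : 0 ≤ m) (hc : 0 < c) (ht : 0 < t) :
    c ^ (-m) + -m * c ^ (-m - 1) * (t - c) ≤ t ^ (-m) := by
  have h := one_add_sub_mul_le_rpow_neg hm (div_pos ht hc)
  rw [div_rpow ht.le hc.le, le_div_iff₀ (rpow_pos_of_pos hc _)] at h
  rw [rpow_sub hc, rpow_one]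
  have := mul_le_mul_of_nonneg_left h hc.le
  field_simp at this ⊢
  linarith

/-- Unlike `ConvexOn.map_integral_le`, this form of Jensen's inequality needs no closed domain of
continuity of `g`, which `t ↦ t ^ (-m)` lacks on `[0, ∞)`. -/
theorem le_integral_comp_of_supporting_line {α : Type*} [MeasurableSpace α] {μ : Measure α}
    [IsProbabilityMeasure μ] {f : α → ℝ} {g : ℝ → ℝ} {k : ℝ}
    (hf : Integrable f μ) (hgf : Integrable (fun x ↦ g (f x)) μ)
    (hline : ∀ᵐ x ∂μ, g (∫ x, f x ∂μ) + k * (f x - ∫ x, f x ∂μ) ≤ g (f x)) :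
    g (∫ x, f x ∂μ) ≤ ∫ x, g (f x) ∂μ := by
  set c := ∫ x, f x ∂μ
  have hlin : Integrable (fun x ↦ k * (f x - c)) μ := (hf.sub (integrable_const c)).const_mul k
  calc g c = ∫ x, (g c + k * (f x - c)) ∂μ := by
        rw [integral_add (integrable_const _) hlin, integral_const_mul,
          integral_sub hf (integrable_const _)]
        simp [c]
    _ ≤ ∫ x, g (f x) ∂μ := integral_mono_ae ((integrable_const _).add hlin) hgf hline

theorem integral_pos_of_ae_pos {α : Type*} [MeasurableSpace α] {μ : Measure α} [NeZero μ]
    {f : α → ℝ} (hf : Integrable f μ) (hpos : ∀ᵐ x ∂μ, 0 < f x) : 0 < ∫ x, f x ∂μ := by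
  rw [integral_pos_iff_support_of_nonneg_ae (hpos.mono fun _ h ↦ h.le) hf]
  refine pos_iff_ne_zero.2 fun h ↦ ?_
  obtain ⟨x, hx0, hx⟩ := (((Measure.measure_support_eq_zero_iff μ).1 h).and hpos).exists
  exact hx.ne' hx0

lemma neg_rpow_neg_add_rpow_one_sub_add_sub_sq_le {m X : ℝ} (hm : 0 ≤ m) (hX : 0 < X) :
    -X ^ (-m) + X ^ (1 - m) + X - X ^ 2 ≤ -(X - 1) ^ 2 := by
  rw [sub_eq_neg_add 1, rpow_add hX, rpow_one]
  rcases le_total X 1 with h | h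
  · nlinarith [one_le_rpow_of_pos_of_le_one_of_nonpos hX h (neg_nonpos.2 hm)]
  · nlinarith [rpow_le_one_of_one_le_of_nonpos h (neg_nonpos.2 hm)]

theorem neg_integral_rpow_neg_add_integral_rpow_one_sub_le {α : Type*} [MeasurableSpace α]
    {μ : Measure α} [IsProbabilityMeasure μ] {m : ℝ} (hm₀ : 0 ≤ m) (hm₁ : m ≤ 1) {u : α → ℝ}
    (hpos : ∀ᵐ x ∂μ, 0 < u x) (hu : Integrable u μ)
    (hu_neg : Integrable (fun x ↦ u x ^ (-m)) μ)
    (hu_one_sub : Integrable (fun x ↦ u x ^ (1 - m)) μ) :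
    -(∫ x, u x ^ (-m) ∂μ) + ∫ x, u x ^ (1 - m) ∂μ + ∫ x, u x ∂μ - (∫ x, u x ∂μ) ^ 2 ≤
      -((∫ x, u x ∂μ) - 1) ^ 2 := by
  set A := ∫ x, u x ∂μ
  have hA : 0 < A := integral_pos_of_ae_pos hu hpos
  have h_neg : A ^ (-m) ≤ ∫ x, u x ^ (-m) ∂μ :=
    le_integral_comp_of_supporting_line (g := (· ^ (-m))) (k := -m * A ^ (-m - 1)) hu hu_neg
      (hpos.mono fun _ ↦ rpow_neg_tangent_le hm₀ hA)
  have h_one_sub : ∫ x, u x ^ (1 - m) ∂μ ≤ A ^ (1 - m) :=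
    (concaveOn_rpow (sub_nonneg.2 hm₁) (by linarith)).le_map_integral
      (continuousOn_id.rpow_const fun _ _ ↦ Or.inr (sub_nonneg.2 hm₁)) isClosed_Ici
      (hpos.mono fun _ h ↦ h.le) hu hu_one_sub
  linarith [neg_rpow_neg_add_rpow_one_sub_add_sub_sq_le hm₀ hA]

/-- For `m ∈ (0,1)` and integrable `u : (0,1) → (0,∞)` with mean `⟨u⟩`,
`J_{m,2}[u] := -⟨u^{-m}⟩ + ⟨u^{1-m}⟩ + ⟨u⟩ - ⟨u⟩² ≤ -(⟨u⟩ - 1)²`. -/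
theorem stmt_8 (m : ℝ) (hm : m ∈ Set.Ioo (0 : ℝ) 1) (u : ℝ → ℝ)
    (hupos : ∀ s ∈ Set.Ioo (0 : ℝ) 1, 0 < u s)
    (hu : IntegrableOn u (Set.Ioo (0 : ℝ) 1))
    (hu1 : IntegrableOn (fun s => u s ^ (-m)) (Set.Ioo (0 : ℝ) 1))
    (hu2 : IntegrableOn (fun s => u s ^ (1 - m)) (Set.Ioo (0 : ℝ) 1)) :
    -(∫ s in Set.Ioo (0 : ℝ) 1, u s ^ (-m)) + (∫ s in Set.Ioo (0 : ℝ) 1, u s ^ (1 - m)) +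
        (∫ s in Set.Ioo (0 : ℝ) 1, u s) - (∫ s in Set.Ioo (0 : ℝ) 1, u s) ^ (2 : ℕ) ≤
      -((∫ s in Set.Ioo (0 : ℝ) 1, u s) - 1) ^ (2 : ℕ) := by
  have : IsProbabilityMeasure (volume.restrict (Set.Ioo (0 : ℝ) 1)) := ⟨by simp⟩
  exact neg_integral_rpow_neg_add_integral_rpow_one_sub_le hm.1.le hm.2.le
    (ae_restrict_of_forall_mem measurableSet_Ioo hupos) hu hu1 hu2
end

section
/- Let m > 1, α ≥ 1, β > 0 with β ≤ α^{m/(m+1)}, and X ∈ (0, 1+1/m]. Then -α·X^{-m} + β·X^{1-m} + X^{-m} - X^{1-m} ≤ 0, with equality if and only if α = β = 1. -/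
open Real

/-- Key Bernoulli-type estimate. -/
lemma stmt_9_aux (m α X : ℝ) (hm : 1 < m) (hα : 1 < α) (hX0 : 0 < X)
    (hXle : X ≤ 1 + 1 / m) : (α ^ (m / (m + 1)) - 1) * X < α - 1 := by
  have hm0 : (0:ℝ) < m := by linarith
  have hq0 : 0 < m / (m + 1) := by positivity
  have hq1 : m / (m + 1) < 1 := by
    rw [div_lt_one (by linarith)]; linarith
  have hs : (-1:ℝ) ≤ α - 1 := by linarith
  have hs' : α - 1 ≠ 0 := by linarith
  have hber := rpow_one_add_lt_one_add_mul_self hs hs' hq0 hq1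
  rw [show (1 : ℝ) + (α - 1) = α by ring] at hber
  -- hber : α ^ (m/(m+1)) < 1 + (m/(m+1)) * (α - 1)
  have h1 : α ^ (m / (m + 1)) - 1 < (m / (m + 1)) * (α - 1) := by linarith
  have hαq1 : 1 ≤ α ^ (m / (m + 1)) := Real.one_le_rpow hα.le hq0.le
  calc (α ^ (m / (m + 1)) - 1) * X ≤ (α ^ (m / (m + 1)) - 1) * (1 + 1 / m) := by
        apply mul_le_mul_of_nonneg_left hXle (by linarith)
    _ < (m / (m + 1)) * (α - 1) * (1 + 1 / m) := by
        apply mul_lt_mul_of_pos_right h1 (by positivity)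
    _ = α - 1 := by field_simp

/-- Microscopic estimate: for `m > 1`, `α ≥ 1`, `β > 0` with `β ≤ α^{m/(m+1)}`,
and `X ∈ (0, 1+1/m]`, one has `-α X^{-m} + β X^{1-m} + X^{-m} - X^{1-m} ≤ 0`,
with equality iff `α = β = 1`. -/
theorem stmt_9 (m α β X : ℝ) (hm : 1 < m) (hα : 1 ≤ α) (hβ : 0 < β)
    (hβα : β ≤ α ^ (m / (m + 1))) (hX : X ∈ Set.Ioc (0 : ℝ) (1 + 1 / m)) :
    -α * X ^ (-m) + β * X ^ (1 - m) + X ^ (-m) - X ^ (1 - m) ≤ 0 ∧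
      (-α * X ^ (-m) + β * X ^ (1 - m) + X ^ (-m) - X ^ (1 - m) = 0 ↔ α = 1 ∧ β = 1) := by
  obtain ⟨hX0, hXle⟩ := hX
  have hA : (0:ℝ) < X ^ (-m) := Real.rpow_pos_of_pos hX0 _
  have hfac : X ^ (1 - m) = X ^ (-m) * X := by
    rw [show (1 - m) = -m + 1 by ring, Real.rpow_add hX0, Real.rpow_one]
  have hE : -α * X ^ (-m) + β * X ^ (1 - m) + X ^ (-m) - X ^ (1 - m)
      = X ^ (-m) * (-(α - 1) + (β - 1) * X) := by rw [hfac]; ring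
  -- main inequality on the bracket
  have hbrX : (β - 1) * X ≤ (α ^ (m / (m + 1)) - 1) * X :=
    mul_le_mul_of_nonneg_right (by linarith) hX0.le
  have hkey : -(α - 1) + (β - 1) * X ≤ 0 := by
    rcases eq_or_lt_of_le hα with h1 | h1
    · have : α ^ (m / (m + 1)) = 1 := by rw [← h1, Real.one_rpow]
      nlinarith
    · have := stmt_9_aux m α X hm h1 hX0 hXle
      nlinarith
  constructor
  · rw [hE]
    exact mul_nonpos_of_nonneg_of_nonpos hA.le hkey
  · constructor
    · intro h
      rw [hE] at h
      have hbr : -(α - 1) + (β - 1) * X = 0 := by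
        rcases mul_eq_zero.mp h with h' | h'
        · exact absurd h' hA.ne'
        · exact h'
      have hα1 : α = 1 := by
        by_contra hne
        have h1 : 1 < α := lt_of_le_of_ne hα (Ne.symm hne)
        have := stmt_9_aux m α X hm h1 hX0 hXle
        nlinarith
      have hβ1 : β = 1 := by
        have : α ^ (m / (m + 1)) = 1 := by rw [hα1, Real.one_rpow]
        have hβle : β ≤ 1 := by linarith [hβα]
        nlinarith
      exact ⟨hα1, hβ1⟩
    · rintro ⟨h1, h2⟩
      rw [hE, h1, h2]; ring
end

section
/- Let k ∈ (-1,0), m = 1-k, and χ > 0. Suppose ρ̄ ∈ L^1_+(ℝ) with ∫ρ̄ = 1 satisfies the fixed-point identity ρ̄(p)^m = χ·∫_ℝ∫_0^1 |q|^{1-m}·ρ̄(p-sq)·ρ̄(p-sq+q) ds dq for a.e. p. Then the free energy vanishes: (1/(m-1))∫_ℝ ρ̄(x)^m dx + (χ/k)∬_{ℝ×ℝ} ρ̄(x)|x-y|^k ρ̄(y) dx dy = 0. -/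
open Real MeasureTheory
open scoped ENNReal

-- affine preimage of a null set is null
lemma aux_affine_null {N : Set ℝ} (hN : volume N = 0) {a : ℝ} (ha : a ≠ 0) (b : ℝ) :
    volume {s : ℝ | b + s * a ∈ N} = 0 := by
  have h1 : {s : ℝ | b + s * a ∈ N} = (· * a) ⁻¹' ((b + ·) ⁻¹' N) := rfl
  rw [h1, Real.volume_preimage_mul_right ha, measure_preimage_add, hN, mul_zero]

-- |u|^k is "lintegrable" near 0 for k > -1
lemma aux_ker_fin {k : ℝ} (hk1 : -1 < k) :
    ∫⁻ u in Set.Ioo (-1:ℝ) 1, ENNReal.ofReal (|u| ^ k) < ⊤ := by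
  have hpos : ∫⁻ u in Set.Ioc (0:ℝ) 1, ENNReal.ofReal (|u| ^ k) < ⊤ := by
    have hInt : IntegrableOn (fun u : ℝ => u ^ k) (Set.Ioc 0 1) := by
      have h := intervalIntegral.intervalIntegrable_rpow' (a := 0) (b := 1) hk1
      rwa [intervalIntegrable_iff, Set.uIoc_of_le zero_le_one] at h
    refine lt_of_le_of_lt ?_ hInt.2
    refine lintegral_mono_ae ((ae_restrict_iff' measurableSet_Ioc).2 (ae_of_all _ fun u hu => ?_))
    rw [abs_of_pos hu.1]
    exact Real.ofReal_le_enorm _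
  have hneg : ∫⁻ u in Set.Ioc (-1:ℝ) 0, ENNReal.ofReal (|u| ^ k) < ⊤ := by
    have hmp := Measure.measurePreserving_neg (volume : Measure ℝ)
    have hemb : MeasurableEmbedding (fun x : ℝ => -x) :=
      (MeasurableEquiv.neg ℝ).measurableEmbedding
    have h := hmp.setLIntegral_comp_preimage_emb hemb
      (fun u => ENNReal.ofReal (|u| ^ k)) (Set.Ioc (-1:ℝ) 0)
    have hpre : (fun x : ℝ => -x) ⁻¹' Set.Ioc (-1:ℝ) 0 = Set.Ico (0:ℝ) 1 := by
      ext x; simp only [Set.mem_preimage, Set.mem_Ioc, Set.mem_Ico]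
      constructor <;> intro hx <;> constructor <;> linarith [hx.1, hx.2]
    rw [hpre] at h
    rw [← h]
    have h2 : ∫⁻ x in Set.Ico (0:ℝ) 1, ENNReal.ofReal (|(-x)| ^ k)
        = ∫⁻ x in Set.Ico (0:ℝ) 1, ENNReal.ofReal (|x| ^ k) :=
      lintegral_congr fun x => by rw [abs_neg]
    rw [h2]
    have hsub : Set.Ico (0:ℝ) 1 ⊆ {0} ∪ Set.Ioc (0:ℝ) 1 := by
      intro x hx
      rcases eq_or_lt_of_le hx.1 with h' | h'
      · exact Or.inl (by simp [← h'])
      · exact Or.inr ⟨h', hx.2.le⟩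
    calc ∫⁻ x in Set.Ico (0:ℝ) 1, ENNReal.ofReal (|x| ^ k)
        ≤ ∫⁻ x in ({0} ∪ Set.Ioc (0:ℝ) 1 : Set ℝ), ENNReal.ofReal (|x| ^ k) :=
          lintegral_mono_set hsub
      _ ≤ (∫⁻ x in ({0} : Set ℝ), ENNReal.ofReal (|x| ^ k))
            + ∫⁻ x in Set.Ioc (0:ℝ) 1, ENNReal.ofReal (|x| ^ k) := lintegral_union_le _ _ _
      _ < ⊤ := by
          have hz : (∫⁻ x in ({0} : Set ℝ), ENNReal.ofReal (|x| ^ k)) = 0 := by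
            rw [Measure.restrict_eq_zero.2 (by simp), lintegral_zero_measure]
          rw [hz, zero_add]; exact hpos
  have hsub : Set.Ioo (-1:ℝ) 1 ⊆ Set.Ioc (-1:ℝ) 0 ∪ Set.Ioc (0:ℝ) 1 := by
    intro x hx
    rcases le_or_gt x 0 with h | h
    · exact Or.inl ⟨hx.1, h⟩
    · exact Or.inr ⟨h, hx.2.le⟩
  calc ∫⁻ u in Set.Ioo (-1:ℝ) 1, ENNReal.ofReal (|u| ^ k)
      ≤ ∫⁻ u in (Set.Ioc (-1:ℝ) 0 ∪ Set.Ioc (0:ℝ) 1 : Set ℝ), ENNReal.ofReal (|u| ^ k) :=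
        lintegral_mono_set hsub
    _ ≤ (∫⁻ u in Set.Ioc (-1:ℝ) 0, ENNReal.ofReal (|u| ^ k))
          + ∫⁻ u in Set.Ioc (0:ℝ) 1, ENNReal.ofReal (|u| ^ k) := lintegral_union_le _ _ _
    _ < ⊤ := ENNReal.add_lt_top.2 ⟨hneg, hpos⟩

/-- If a stationary state `ρ̄` of the aggregation-diffusion equation satisfies the
fixed-point characterisation
`ρ̄(p)^m = χ ∫ℝ ∫₀¹ |q|^{1-m} ρ̄(p-sq) ρ̄(p-sq+q) ds dq`,
then its free energy vanishes:
`(1/(m-1)) ∫ ρ̄^m + (χ/k) ∬ ρ̄(x)|x-y|^k ρ̄(y) dx dy = 0`. -/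
theorem stmt_13 (k m χ : ℝ) (hk : k ∈ Set.Ioo (-1 : ℝ) 0) (hm : m = 1 - k) (hχ : 0 < χ)
    (ρ : ℝ → ℝ) (hρpos : ∀ x, 0 ≤ ρ x) (hρint : Integrable ρ)
    (hρmass : ∫ x, ρ x = 1)
    (hρm : Integrable (fun x => ρ x ^ m))
    (hW : Integrable (fun x => ∫ y, ρ x * |x - y| ^ k * ρ y))
    (hfix : ∀ᵐ p : ℝ, ρ p ^ m =
      χ * ∫ q : ℝ, ∫ s in Set.Ioo (0 : ℝ) 1,
        |q| ^ (1 - m) * ρ (p - s * q) * ρ (p - s * q + q)) :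
    (1 / (m - 1)) * (∫ x, ρ x ^ m) +
      (χ / k) * (∫ x, ∫ y, ρ x * |x - y| ^ k * ρ y) = 0 := by
  obtain ⟨hk1, hk0⟩ := hk
  have hkne : k ≠ 0 := ne_of_lt hk0
  have h1m : 1 - m = k := by rw [hm]; ring
  -- measurable nonnegative representative g of ρ
  have hmeas : AEMeasurable ρ (volume : Measure ℝ) := hρint.aestronglyMeasurable.aemeasurable
  set g : ℝ → ℝ := fun x => max (hmeas.mk ρ x) 0 with hgdef
  have hgmeas : Measurable g := hmeas.measurable_mk.max measurable_const
  have hg0 : ∀ x, 0 ≤ g x := fun x => le_max_right _ _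
  have hρg : ρ =ᵐ[volume] g := by
    filter_upwards [hmeas.ae_eq_mk] with x hx
    rw [hgdef]; dsimp only; rw [← hx, max_eq_left (hρpos x)]
  have hE : volume {x : ℝ | ¬ ρ x = g x} = 0 := ae_iff.mp hρg
  have hcomp : ∀ (b a : ℝ), a ≠ 0 → ∀ᵐ s : ℝ, ρ (b + s * a) = g (b + s * a) := by
    intro b a ha
    rw [ae_iff]
    exact aux_affine_null hE ha b
  set F : ℝ → ℝ≥0∞ := fun x => ENNReal.ofReal (g x) with hFdef
  have hFmeas : Measurable F := ENNReal.measurable_ofReal.comp hgmeas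
  have hFne : ∀ x, F x ≠ ⊤ := fun _ => ENNReal.ofReal_ne_top
  have habs : Measurable fun q : ℝ => |q| ^ k := by
    have hfun : (fun q : ℝ => |q| ^ k)
        = fun q => if q = 0 then 0 else Real.exp (Real.log |q| * k) := by
      funext q
      by_cases h : q = 0
      · simp [h, Real.zero_rpow hkne]
      · rw [if_neg h, ← Real.rpow_def_of_pos (abs_pos.2 h)]
    rw [hfun]
    exact Measurable.ite (MeasurableSet.singleton 0)
      measurable_const
      (Real.measurable_exp.comp ((Real.measurable_log.comp measurable_abs).mul_const k))
  set K : ℝ → ℝ≥0∞ := fun q => ENNReal.ofReal (|q| ^ k) with hKdef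
  have hKmeas : Measurable K := ENNReal.measurable_ofReal.comp habs
  have hKne : ∀ q, K q ≠ ⊤ := fun _ => ENNReal.ofReal_ne_top
  have hKneg : ∀ q, K (-q) = K q := fun q => by rw [hKdef]; dsimp only; rw [abs_neg]
  set C : ℝ → ℝ≥0∞ := fun q => ∫⁻ x, F x * F (x + q) with hCdef
  have htrans : ∀ s q : ℝ, (∫⁻ p, F (p - s * q) * F (p - s * q + q)) = C q := by
    intro s q
    have h := lintegral_add_right_eq_self (μ := volume) (fun x => F x * F (x + q)) (-(s * q))
    calc ∫⁻ p, F (p - s * q) * F (p - s * q + q)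
        = ∫⁻ p, F (p + -(s * q)) * F (p + -(s * q) + q) :=
          lintegral_congr fun p => by rw [sub_eq_add_neg]
      _ = C q := h
  have hFone : ∫⁻ x, F x = 1 := by
    have h1 : ∫⁻ x, F x = ∫⁻ x, ENNReal.ofReal (ρ x) :=
      lintegral_congr_ae (hρg.mono fun x hx => by rw [hFdef]; dsimp only; rw [hx])
    rw [h1, ← ofReal_integral_eq_lintegral_ofReal hρint (ae_of_all _ hρpos), hρmass,
      ENNReal.ofReal_one]
  set N : ℝ → ℝ≥0∞ := fun x => ∫⁻ y, K (x - y) * F y with hNdef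
  have hNalt : ∀ x, N x = ∫⁻ q, K q * F (x + q) := by
    intro x
    have h := lintegral_add_right_eq_self (μ := volume) (fun y => K (x - y) * F y) x
    rw [hNdef]; dsimp only; rw [← h]
    refine lintegral_congr fun q => ?_
    have e1 : x - (q + x) = -q := by ring
    rw [e1, hKneg, add_comm q x]
  set e : ℝ → ℝ≥0∞ := Set.indicator (Set.Ioo (-1:ℝ) 1) K with hedef
  have hemeas : Measurable e := hKmeas.indicator measurableSet_Ioo
  have hc0 : ∫⁻ u, e u < ⊤ := by
    rw [hedef, lintegral_indicator measurableSet_Ioo]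
    exact aux_ker_fin hk1
  have hKe : ∀ u, K u ≤ e u + 1 := by
    intro u
    by_cases h : u ∈ Set.Ioo (-1:ℝ) 1
    · rw [hedef, Set.indicator_of_mem h]; exact le_self_add
    · rw [hedef, Set.indicator_of_notMem h, zero_add]
      have h1 : (1:ℝ) ≤ |u| := le_of_not_gt fun hlt => h (abs_lt.mp hlt)
      calc K u = ENNReal.ofReal (|u| ^ k) := rfl
        _ ≤ ENNReal.ofReal 1 :=
            ENNReal.ofReal_le_ofReal (Real.rpow_le_one_of_one_le_of_nonpos h1 hk0.le)
        _ = 1 := ENNReal.ofReal_one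
  have hNbound : ∀ x, N x ≤ (∫⁻ y, e (x - y) * F y) + 1 := by
    intro x
    have hmeas1 : Measurable fun y => e (x - y) * F y :=
      (hemeas.comp (measurable_const.sub measurable_id)).mul hFmeas
    calc N x ≤ ∫⁻ y, (e (x - y) * F y + F y) := by
          refine lintegral_mono fun y => ?_
          calc K (x - y) * F y ≤ (e (x - y) + 1) * F y := mul_le_mul_left (hKe _) _
            _ = e (x - y) * F y + 1 * F y := by rw [add_mul]
            _ = e (x - y) * F y + F y := by rw [one_mul]
      _ = (∫⁻ y, e (x - y) * F y) + ∫⁻ y, F y := lintegral_add_left hmeas1 _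
      _ = (∫⁻ y, e (x - y) * F y) + 1 := by rw [hFone]
  have hDfin : ∫⁻ x, (∫⁻ y, e (x - y) * F y) < ⊤ := by
    have hswap := lintegral_lintegral_swap (μ := (volume : Measure ℝ)) (ν := volume)
      (f := fun x y => e (x - y) * F y)
      (((hemeas.comp (measurable_fst.sub measurable_snd)).mul
        (hFmeas.comp measurable_snd)).aemeasurable)
    rw [hswap]
    have heq : ∀ y : ℝ, (∫⁻ x, e (x - y) * F y) = (∫⁻ u, e u) * F y := by
      intro y
      rw [lintegral_mul_const' _ _ (hFne y)]
      congr 1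
      have h := lintegral_add_right_eq_self (μ := volume) e (-y)
      rw [← h]
      exact lintegral_congr fun x => by rw [sub_eq_add_neg]
    calc ∫⁻ y, ∫⁻ x, e (x - y) * F y = ∫⁻ y, (∫⁻ u, e u) * F y := lintegral_congr heq
      _ = (∫⁻ u, e u) * ∫⁻ y, F y := lintegral_const_mul' _ _ hc0.ne
      _ < ⊤ := by rw [hFone, mul_one]; exact hc0
  have hNfin : ∀ᵐ x : ℝ, N x < ⊤ := by
    have hmeasD : Measurable fun x => ∫⁻ y, e (x - y) * F y :=
      Measurable.lintegral_prod_right'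
        ((hemeas.comp (measurable_fst.sub measurable_snd)).mul (hFmeas.comp measurable_snd))
    filter_upwards [ae_lt_top hmeasD hDfin.ne] with x hx
    exact lt_of_le_of_lt (hNbound x) (ENNReal.add_lt_top.2 ⟨hx, ENNReal.one_lt_top⟩)
  -- relate the interaction term to F and N
  have hWnn : ∀ x, 0 ≤ ∫ y, ρ x * |x - y| ^ k * ρ y := fun x =>
    integral_nonneg fun y =>
      mul_nonneg (mul_nonneg (hρpos x) (Real.rpow_nonneg (abs_nonneg _) k)) (hρpos y)
  have hWx : ∀ᵐ x : ℝ, (∫ y, ρ x * |x - y| ^ k * ρ y) = (F x * N x).toReal := by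
    have hall : ∀ x : ℝ, (∫ y, ρ x * |x - y| ^ k * ρ y)
        = (ENNReal.ofReal (ρ x) * N x).toReal := by
      intro x
      have hnn : 0 ≤ᵐ[volume] fun y => ρ x * |x - y| ^ k * ρ y := ae_of_all _ fun y =>
        mul_nonneg (mul_nonneg (hρpos x) (Real.rpow_nonneg (abs_nonneg _) k)) (hρpos y)
      have hsm : AEStronglyMeasurable (fun y => ρ x * |x - y| ^ k * ρ y) volume := by
        apply AEStronglyMeasurable.mul ?_ hρint.aestronglyMeasurable
        exact (measurable_const.mul (habs.comp (measurable_const.sub measurable_id))).aestronglyMeasurable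
      rw [integral_eq_lintegral_of_nonneg_ae hnn hsm]
      congr 1
      have hpt : ∀ᵐ y : ℝ, ENNReal.ofReal (ρ x * |x - y| ^ k * ρ y)
          = ENNReal.ofReal (ρ x) * (K (x - y) * F y) := by
        filter_upwards [hρg] with y hy
        rw [ENNReal.ofReal_mul (mul_nonneg (hρpos x) (Real.rpow_nonneg (abs_nonneg _) k)),
          ENNReal.ofReal_mul (hρpos x), hy, mul_assoc]
      rw [lintegral_congr_ae hpt, lintegral_const_mul' _ _ ENNReal.ofReal_ne_top]
    filter_upwards [hρg] with x hx
    rw [hall x, hx]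
  have hofW : ∀ᵐ x : ℝ, ENNReal.ofReal (∫ y, ρ x * |x - y| ^ k * ρ y) = F x * N x := by
    filter_upwards [hWx, hNfin] with x h1 h2
    rw [h1, ENNReal.ofReal_toReal (ENNReal.mul_ne_top (hFne x) h2.ne)]
  have hJfin : ∫⁻ x, F x * N x < ⊤ := by
    have h1 : ∫⁻ x, F x * N x = ∫⁻ x, ENNReal.ofReal (∫ y, ρ x * |x - y| ^ k * ρ y) :=
      (lintegral_congr_ae hofW).symm
    rw [h1]
    exact lt_of_le_of_lt (lintegral_mono fun x => Real.ofReal_le_enorm _) hW.2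
  have hB : (∫ x, ∫ y, ρ x * |x - y| ^ k * ρ y) = (∫⁻ x, F x * N x).toReal := by
    rw [integral_eq_lintegral_of_nonneg_ae (ae_of_all _ hWnn) hW.aestronglyMeasurable]
    congr 1
    exact lintegral_congr_ae hofW
  -- J = ∫⁻ q, K q * C q
  have hJC : ∫⁻ x, F x * N x = ∫⁻ q, K q * C q := by
    have h1 : ∀ x, F x * N x = ∫⁻ q, F x * (K q * F (x + q)) := by
      intro x
      rw [hNalt x, lintegral_const_mul' _ _ (hFne x)]
    calc ∫⁻ x, F x * N x = ∫⁻ x, ∫⁻ q, F x * (K q * F (x + q)) := lintegral_congr h1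
      _ = ∫⁻ q, ∫⁻ x, F x * (K q * F (x + q)) := by
          apply lintegral_lintegral_swap
          exact ((hFmeas.comp measurable_fst).mul ((hKmeas.comp measurable_snd).mul
            (hFmeas.comp (measurable_fst.add measurable_snd)))).aemeasurable
      _ = ∫⁻ q, K q * C q := by
          refine lintegral_congr fun q => ?_
          rw [hCdef]; dsimp only
          rw [← lintegral_const_mul' (K q) _ (hKne q)]
          exact lintegral_congr fun x => by ring
  -- the triple integral
  set T : ℝ → ℝ≥0∞ := fun p => ∫⁻ q, ∫⁻ s in Set.Ioo (0:ℝ) 1,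
    K q * (F (p - s * q) * F (p - s * q + q)) with hTdef
  have hinner_meas : Measurable fun z : ℝ × ℝ => ∫⁻ s in Set.Ioo (0:ℝ) 1,
      K z.2 * (F (z.1 - s * z.2) * F (z.1 - s * z.2 + z.2)) := by
    apply Measurable.lintegral_prod_right'
      (f := fun w : (ℝ × ℝ) × ℝ => K w.1.2 * (F (w.1.1 - w.2 * w.1.2) * F (w.1.1 - w.2 * w.1.2 + w.1.2)))
    have ha : Measurable fun w : (ℝ × ℝ) × ℝ => w.1.1 := measurable_fst.comp measurable_fst
    have hb : Measurable fun w : (ℝ × ℝ) × ℝ => w.1.2 := measurable_snd.comp measurable_fst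
    have hc : Measurable fun w : (ℝ × ℝ) × ℝ => w.2 := measurable_snd
    exact (hKmeas.comp hb).mul ((hFmeas.comp (ha.sub (hc.mul hb))).mul
      (hFmeas.comp ((ha.sub (hc.mul hb)).add hb)))
  have hTmeas : Measurable T := Measurable.lintegral_prod_right' hinner_meas
  have hTJ : ∫⁻ p, T p = ∫⁻ q, K q * C q := by
    calc ∫⁻ p, T p
        = ∫⁻ q, ∫⁻ p, ∫⁻ s in Set.Ioo (0:ℝ) 1, K q * (F (p - s * q) * F (p - s * q + q)) := by
          apply lintegral_lintegral_swap
          exact hinner_meas.aemeasurable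
      _ = ∫⁻ q, K q * C q := by
          refine lintegral_congr fun q => ?_
          have hp : ∀ p : ℝ, (∫⁻ s in Set.Ioo (0:ℝ) 1, K q * (F (p - s * q) * F (p - s * q + q)))
              = K q * ∫⁻ s in Set.Ioo (0:ℝ) 1, F (p - s * q) * F (p - s * q + q) := fun p =>
            lintegral_const_mul' _ _ (hKne q)
          calc ∫⁻ p, ∫⁻ s in Set.Ioo (0:ℝ) 1, K q * (F (p - s * q) * F (p - s * q + q))
              = ∫⁻ p, K q * ∫⁻ s in Set.Ioo (0:ℝ) 1, F (p - s * q) * F (p - s * q + q) :=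
                lintegral_congr hp
            _ = K q * ∫⁻ p, ∫⁻ s in Set.Ioo (0:ℝ) 1, F (p - s * q) * F (p - s * q + q) :=
                lintegral_const_mul' _ _ (hKne q)
            _ = K q * ∫⁻ s in Set.Ioo (0:ℝ) 1, ∫⁻ p, F (p - s * q) * F (p - s * q + q) := by
                congr 1
                apply lintegral_lintegral_swap
                exact ((hFmeas.comp (measurable_fst.sub (measurable_snd.mul measurable_const))).mul
                  (hFmeas.comp ((measurable_fst.sub (measurable_snd.mul measurable_const)).add
                    measurable_const))).aemeasurable
            _ = K q * ∫⁻ _ in Set.Ioo (0:ℝ) 1, C q := by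
                congr 1
                exact lintegral_congr fun s => htrans s q
            _ = K q * C q := by
                rw [setLIntegral_const, Real.volume_Ioo]
                norm_num
  have hTfin : ∀ᵐ p : ℝ, T p < ⊤ :=
    ae_lt_top hTmeas (by rw [hTJ, ← hJC]; exact hJfin.ne)
  -- main claim : a.e. pointwise identity in ℝ≥0∞
  have hclaim : ∀ᵐ p : ℝ, ENNReal.ofReal (ρ p ^ m) = ENNReal.ofReal χ * T p := by
    filter_upwards [hfix, hTfin] with p hfixp hTp
    have hRmeas : Measurable fun q =>
        ∫⁻ s in Set.Ioo (0:ℝ) 1, K q * (F (p - s * q) * F (p - s * q + q)) := by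
      apply Measurable.lintegral_prod_right'
        (f := fun w : ℝ × ℝ => K w.1 * (F (p - w.2 * w.1) * F (p - w.2 * w.1 + w.1)))
      have ha : Measurable fun w : ℝ × ℝ => w.1 := measurable_fst
      have hc : Measurable fun w : ℝ × ℝ => w.2 := measurable_snd
      exact (hKmeas.comp ha).mul ((hFmeas.comp (measurable_const.sub (hc.mul ha))).mul
        (hFmeas.comp ((measurable_const.sub (hc.mul ha)).add ha)))
    have hRfin : ∀ᵐ q : ℝ,
        (∫⁻ s in Set.Ioo (0:ℝ) 1, K q * (F (p - s * q) * F (p - s * q + q))) < ⊤ :=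
      ae_lt_top hRmeas hTp.ne
    have hq0 : ∀ᵐ q : ℝ, q ≠ (0:ℝ) := by
      rw [ae_iff]
      have hset : {q : ℝ | ¬ q ≠ 0} = {0} := by ext q; simp
      rw [hset]
      exact measure_singleton 0
    have hkey : ∀ᵐ q : ℝ,
        (∫ s in Set.Ioo (0:ℝ) 1, |q| ^ (1 - m) * ρ (p - s * q) * ρ (p - s * q + q))
        = (∫⁻ s in Set.Ioo (0:ℝ) 1, K q * (F (p - s * q) * F (p - s * q + q))).toReal := by
      filter_upwards [hq0] with q hq
      have e1 : ∀ᵐ s : ℝ, ρ (p - s * q) = g (p - s * q) := by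
        filter_upwards [hcomp p (-q) (neg_ne_zero.2 hq)] with s hs
        rw [show p - s * q = p + s * -q by ring]
        exact hs
      have e2 : ∀ᵐ s : ℝ, ρ (p - s * q + q) = g (p - s * q + q) := by
        filter_upwards [hcomp (p + q) (-q) (neg_ne_zero.2 hq)] with s hs
        rw [show p - s * q + q = p + q + s * -q by ring]
        exact hs
      have hnn : 0 ≤ᵐ[volume.restrict (Set.Ioo (0:ℝ) 1)]
          fun s => |q| ^ (1 - m) * ρ (p - s * q) * ρ (p - s * q + q) := ae_of_all _ fun s =>
        mul_nonneg (mul_nonneg (Real.rpow_nonneg (abs_nonneg _) _) (hρpos _)) (hρpos _)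
      have hsm : AEStronglyMeasurable
          (fun s => |q| ^ (1 - m) * ρ (p - s * q) * ρ (p - s * q + q))
          (volume.restrict (Set.Ioo (0:ℝ) 1)) := by
        have hgm : Measurable fun s : ℝ => |q| ^ (1 - m) * g (p - s * q) * g (p - s * q + q) :=
          (measurable_const.mul (hgmeas.comp (measurable_const.sub (measurable_id.mul_const q)))).mul
            (hgmeas.comp ((measurable_const.sub (measurable_id.mul_const q)).add_const q))
        refine hgm.aestronglyMeasurable.congr ?_
        filter_upwards [ae_restrict_of_ae e1, ae_restrict_of_ae e2] with s h1 h2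
        rw [h1, h2]
      rw [integral_eq_lintegral_of_nonneg_ae hnn hsm]
      congr 1
      refine lintegral_congr_ae ?_
      filter_upwards [ae_restrict_of_ae e1, ae_restrict_of_ae e2] with s h1 h2
      rw [h1, h2, h1m,
        ENNReal.ofReal_mul (mul_nonneg (Real.rpow_nonneg (abs_nonneg _) _) (hg0 _)),
        ENNReal.ofReal_mul (Real.rpow_nonneg (abs_nonneg _) _), mul_assoc]
    have hHsm : AEStronglyMeasurable
        (fun q => ∫ s in Set.Ioo (0:ℝ) 1, |q| ^ (1 - m) * ρ (p - s * q) * ρ (p - s * q + q))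
        volume := by
      refine (ENNReal.measurable_toReal.comp hRmeas).aestronglyMeasurable.congr ?_
      filter_upwards [hkey] with q hq
      rw [hq]; rfl
    have hHnn : 0 ≤ᵐ[volume]
        fun q => ∫ s in Set.Ioo (0:ℝ) 1, |q| ^ (1 - m) * ρ (p - s * q) * ρ (p - s * q + q) := by
      filter_upwards [hkey] with q hq
      rw [hq]
      exact ENNReal.toReal_nonneg
    have hGp : (∫ q : ℝ, ∫ s in Set.Ioo (0:ℝ) 1,
        |q| ^ (1 - m) * ρ (p - s * q) * ρ (p - s * q + q)) = (T p).toReal := by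
      rw [integral_eq_lintegral_of_nonneg_ae hHnn hHsm]
      congr 1
      refine lintegral_congr_ae ?_
      filter_upwards [hkey, hRfin] with q h1 h2
      rw [h1, ENNReal.ofReal_toReal h2.ne]
    rw [hfixp, hGp, ENNReal.ofReal_mul hχ.le, ENNReal.ofReal_toReal hTp.ne]
  -- compute the entropy term
  have hAeq : (∫ x, ρ x ^ m) = χ * (∫⁻ q, K q * C q).toReal := by
    rw [integral_eq_lintegral_of_nonneg_ae (ae_of_all _ fun x => Real.rpow_nonneg (hρpos x) m)
      hρm.aestronglyMeasurable]
    rw [lintegral_congr_ae hclaim, lintegral_const_mul' _ _ ENNReal.ofReal_ne_top, hTJ,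
      ENNReal.toReal_mul, ENNReal.toReal_ofReal hχ.le]
  have hBeq : (∫ x, ∫ y, ρ x * |x - y| ^ k * ρ y) = (∫⁻ q, K q * C q).toReal := by
    rw [hB, hJC]
  rw [hAeq, hBeq, hm]
  rw [show (1:ℝ) - k - 1 = -k by ring, div_neg]
  ring
end
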